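/- arXiv:2312.13098 — 9 statements merged into one kernel-verified Lean document; each statement's English description precedes it below -/
import Mathlib

section
/- For every generation n with f < n ≤ d, the total number of rabbits satisfies F(n) = F(n−1) + F(n−f). -/
theorem stmt_3 (f d : ℕ) (hf : 1 ≤ f) (hfd : f ≤ d)
    (A : ℕ → ℕ → ℕ)
    (hA11 : A 1 1 = 1)
    (hA1 : ∀ x : ℕ, x ≠ 1 → A 1 x = 0)
    (hborn : ∀ n : ℕ, 1 ≤ n → A (n + 1) 1 = ∑ x ∈ Finset.Icc f d, A n x)
    (hage : ∀ n x : ℕ, 1 ≤ n → 1 ≤ x → x ≤ d - 1 → A (n + 1) (x + 1) = A n x)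
    (hdead : ∀ n x : ℕ, x = 0 ∨ x > d → A n x = 0)
    (F : ℕ → ℕ) (hF : ∀ n : ℕ, F n = ∑ x ∈ Finset.Icc 1 d, A n x) :
    ∀ n : ℕ, f < n → n ≤ d → F n = F (n - 1) + F (n - f) := by
  -- Support: no rabbit older than the generation number
  have L1 : ∀ n, 1 ≤ n → ∀ x, n < x → A n x = 0 := by
    intro n hn
    induction n with
    | zero => omega
    | succ m ih =>
      intro x hx
      rcases Nat.lt_or_ge 1 (m + 1) with h1 | h1
      · have hm : 1 ≤ m := by omega
        obtain ⟨y, rfl⟩ : ∃ y, x = y + 1 := ⟨x - 1, by omega⟩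
        by_cases hy : y ≤ d - 1
        · rw [hage m y hm (by omega) hy]
          exact ih hm y (by omega)
        · exact hdead _ _ (Or.inr (by omega))
      · have : m = 0 := by omega
        subst this
        exact hA1 x (by omega)
  -- Shift: a rabbit of age x at generation n was born at generation n - x + 1
  have L2 : ∀ x, 1 ≤ x → x ≤ d → ∀ n, x ≤ n → A n x = A (n - x + 1) 1 := by
    intro x
    induction x with
    | zero => omega
    | succ y ih =>
      intro h1 h2 n hn
      rcases Nat.eq_zero_or_pos y with rfl | hy
      · congr 1; omega
      · have hn1 : 1 ≤ n - 1 := by omega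
        have e : A n (y + 1) = A (n - 1) y := by
          have := hage (n - 1) y hn1 hy (by omega)
          rwa [Nat.sub_add_cancel (by omega)] at this
        rw [e, ih hy (by omega) (n - 1) (by omega)]
        congr 1
        omega
  -- For m ≤ d : F m = Σ_{k=1}^m A k 1
  have L3 : ∀ m, 1 ≤ m → m ≤ d → F m = ∑ k ∈ Finset.Icc 1 m, A k 1 := by
    intro m hm hmd
    rw [hF]
    have trunc : ∑ x ∈ Finset.Icc 1 d, A m x = ∑ x ∈ Finset.Icc 1 m, A m x := by
      symm
      apply Finset.sum_subset
      · intro x hx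
        simp only [Finset.mem_Icc] at *
        omega
      · intro x hx hx'
        simp only [Finset.mem_Icc] at *
        exact L1 m hm x (by omega)
    rw [trunc]
    apply Finset.sum_nbij' (fun x => m - x + 1) (fun k => m - k + 1)
    · intro a ha; simp only [Finset.mem_Icc] at *; omega
    · intro a ha; simp only [Finset.mem_Icc] at *; omega
    · intro a ha; simp only [Finset.mem_Icc] at *; omega
    · intro a ha; simp only [Finset.mem_Icc] at *; omega
    · intro a ha
      simp only [Finset.mem_Icc] at ha
      exact L2 a ha.1 (by omega) m ha.2
  intro n hfn hnd
  have hAn1 : A n 1 = F (n - f) := by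
    have hn1 : 1 ≤ n - 1 := by omega
    have e : A n 1 = ∑ x ∈ Finset.Icc f d, A (n - 1) x := by
      have := hborn (n - 1) hn1
      rwa [Nat.sub_add_cancel (by omega)] at this
    rw [e]
    have trunc : ∑ x ∈ Finset.Icc f d, A (n - 1) x
        = ∑ x ∈ Finset.Icc f (n - 1), A (n - 1) x := by
      symm
      apply Finset.sum_subset
      · intro x hx; simp only [Finset.mem_Icc] at *; omega
      · intro x hx hx'
        simp only [Finset.mem_Icc] at *
        exact L1 (n - 1) hn1 x (by omega)
    rw [trunc, L3 (n - f) (by omega) (by omega)]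
    apply Finset.sum_nbij' (fun x => n - x) (fun k => n - k)
    · intro a ha; simp only [Finset.mem_Icc] at *; omega
    · intro a ha; simp only [Finset.mem_Icc] at *; omega
    · intro a ha; simp only [Finset.mem_Icc] at *; omega
    · intro a ha; simp only [Finset.mem_Icc] at *; omega
    · intro a ha
      simp only [Finset.mem_Icc] at ha
      have := L2 a (by omega) (by omega) (n - 1) ha.2
      rw [this]
      congr 1
      omega
  obtain ⟨m, rfl⟩ : ∃ m, n = m + 1 := ⟨n - 1, by omega⟩
  rw [L3 (m + 1) (by omega) hnd, L3 (m + 1 - 1) (by omega) (by omega),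
    Finset.sum_Icc_succ_top (by omega : 1 ≤ m + 1)]
  simp only [Nat.add_sub_cancel]
  rw [hAn1]
end

section
/- At generation d+1 the total number of rabbits satisfies F(d+1) + 1 = F(d) + F(d+1−f) (that is, F(d+1) = F(d) + F(d+1−f) − 1, accounting for the first death). -/
theorem stmt_4 (f d : ℕ) (hf : 1 ≤ f) (hfd : f ≤ d)
    (A : ℕ → ℕ → ℕ)
    (hA11 : A 1 1 = 1)
    (hA1 : ∀ x : ℕ, x ≠ 1 → A 1 x = 0)
    (hborn : ∀ n : ℕ, 1 ≤ n → A (n + 1) 1 = ∑ x ∈ Finset.Icc f d, A n x)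
    (hage : ∀ n x : ℕ, 1 ≤ n → 1 ≤ x → x ≤ d - 1 → A (n + 1) (x + 1) = A n x)
    (hdead : ∀ n x : ℕ, x = 0 ∨ x > d → A n x = 0)
    (F : ℕ → ℕ) (hF : ∀ n : ℕ, F n = ∑ x ∈ Finset.Icc 1 d, A n x) :
    F (d + 1) + 1 = F d + F (d + 1 - f) := by
  obtain ⟨e, rfl⟩ : ∃ e, d = e + 1 := ⟨d - 1, (Nat.succ_pred_eq_of_pos (by omega)).symm⟩
  obtain ⟨g, rfl⟩ : ∃ g, f = g + 1 := ⟨f - 1, (Nat.succ_pred_eq_of_pos hf).symm⟩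
  have hge : g ≤ e := by omega
  -- iterated aging
  have shift : ∀ k m x : ℕ, 1 ≤ m → 1 ≤ x → x + k ≤ e + 1 → A (m + k) (x + k) = A m x := by
    intro k
    induction k with
    | zero => intro m x _ _ _; rfl
    | succ k ih =>
      intro m x hm hx hxk
      have h1 : A (m + k + 1) (x + k + 1) = A (m + k) (x + k) := by
        apply hage _ _ (by omega) (by omega) (by omega)
      calc A (m + (k+1)) (x + (k+1)) = A (m + k) (x + k) := h1
        _ = A m x := ih m x hm hx (by omega)
  -- no rabbit older than its generation
  have hzero : ∀ m x : ℕ, 1 ≤ m → m < x → A m x = 0 := by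
    intro m
    induction m with
    | zero => intro x h; omega
    | succ m ih =>
      intro x _ hmx
      rcases Nat.eq_zero_or_pos m with h | h
      · subst h; exact hA1 x (by omega)
      · obtain ⟨y, rfl⟩ : ∃ y, x = y + 1 := ⟨x - 1, by omega⟩
        by_cases hy : y ≤ e
        · rw [hage m y (by omega) (by omega) (by omega)]
          exact ih y (by omega) (by omega)
        · exact hdead _ _ (Or.inr (by omega))
  have hAdd : A (e + 1) (e + 1) = 1 := by
    have := shift e 1 1 le_rfl le_rfl (by omega)
    simpa [Nat.add_comm] using this.trans hA11
  -- fertile rabbits at generation e+1 = all rabbits at generation e+1-g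
  have hfert : ∑ x ∈ Finset.Icc (g + 1) (e + 1), A (e + 1) x
      = ∑ y ∈ Finset.Icc 1 (e + 1 - g), A (e + 1 - g) y := by
    apply Finset.sum_nbij' (fun x => x - g) (fun y => y + g)
    · intro x hx; simp only [Finset.mem_Icc] at *; omega
    · intro y hy; simp only [Finset.mem_Icc] at *; omega
    · intro x hx; simp only [Finset.mem_Icc] at hx; omega
    · intro y hy; simp only [Finset.mem_Icc] at hy; omega
    · intro x hx
      simp only [Finset.mem_Icc] at hx
      obtain ⟨y, rfl⟩ : ∃ y, x = y + g := ⟨x - g, by omega⟩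
      have : A (e + 1 - g + g) (y + g) = A (e + 1 - g) y :=
        shift g (e + 1 - g) y (by omega) (by omega) (by omega)
      rw [show e + 1 - g + g = e + 1 by omega] at this
      simp [this]
  -- extend the sum range to Icc 1 (e+1)
  have hext : ∑ y ∈ Finset.Icc 1 (e + 1 - g), A (e + 1 - g) y
      = ∑ y ∈ Finset.Icc 1 (e + 1), A (e + 1 - g) y := by
    apply Finset.sum_subset
    · intro y hy; simp only [Finset.mem_Icc] at *; omega
    · intro y hy hy'
      simp only [Finset.mem_Icc] at hy hy'
      exact hzero _ y (by omega) (by omega)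
  -- aged rabbits at generation e+2
  have haged : ∑ x ∈ Finset.Ioc 1 (e + 1), A (e + 2) x
      = ∑ x ∈ Finset.Icc 1 e, A (e + 1) x := by
    apply Finset.sum_nbij' (fun x => x - 1) (fun y => y + 1)
    · intro x hx; simp only [Finset.mem_Ioc, Finset.mem_Icc] at *; omega
    · intro y hy; simp only [Finset.mem_Ioc, Finset.mem_Icc] at *; omega
    · intro x hx; simp only [Finset.mem_Ioc] at hx; omega
    · intro y hy; omega
    · intro x hx
      simp only [Finset.mem_Ioc] at hx
      obtain ⟨y, rfl⟩ : ∃ y, x = y + 1 := ⟨x - 1, by omega⟩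
      rw [show y + 1 - 1 = y by omega,
        show A (e + 2) (y + 1) = A (e + 1) y from hage (e+1) y (by omega) (by omega) (by omega)]
  -- split F(e+2)
  have hsplit1 : ∑ x ∈ Finset.Icc 1 (e + 1), A (e + 2) x
      = A (e + 2) 1 + ∑ x ∈ Finset.Ioc 1 (e + 1), A (e + 2) x := by
    rw [Finset.Icc_eq_cons_Ioc (by omega), Finset.sum_cons]
  -- split F(e+1) at the top
  have hsplit2 : ∑ x ∈ Finset.Icc 1 (e + 1), A (e + 1) x
      = ∑ x ∈ Finset.Icc 1 e, A (e + 1) x + A (e + 1) (e + 1) :=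
    Finset.sum_Icc_succ_top (by omega) _
  have hb := hborn (e + 1) (by omega)
  rw [hF, hF, hF, hsplit1, hsplit2, hAdd, show e + 2 = e + 1 + 1 from rfl, hb, haged,
    hfert, hext, show e + 1 + 1 - (g + 1) = e + 1 - g by omega]
  ring
end

section
/- For every generation n ≥ d+2, the total number of rabbits satisfies F(n) + F(n−d−1) = F(n−1) + F(n−f) (that is, F(n) = F(n−1) + F(n−f) − F(n−d−1)). -/
theorem stmt_5 (f d : ℕ) (hf : 1 ≤ f) (hfd : f ≤ d)
    (A : ℕ → ℕ → ℕ)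
    (hA11 : A 1 1 = 1)
    (hA1 : ∀ x : ℕ, x ≠ 1 → A 1 x = 0)
    (hborn : ∀ n : ℕ, 1 ≤ n → A (n + 1) 1 = ∑ x ∈ Finset.Icc f d, A n x)
    (hage : ∀ n x : ℕ, 1 ≤ n → 1 ≤ x → x ≤ d - 1 → A (n + 1) (x + 1) = A n x)
    (hdead : ∀ n x : ℕ, x = 0 ∨ x > d → A n x = 0)
    (F : ℕ → ℕ) (hF : ∀ n : ℕ, F n = ∑ x ∈ Finset.Icc 1 d, A n x) :
    ∀ n : ℕ, d + 2 ≤ n → F n + F (n - d - 1) = F (n - 1) + F (n - f) := by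
  set G : ℕ → ℕ := fun j => if 1 ≤ j then A j 1 else 0 with hG
  have GA : ∀ j : ℕ, 1 ≤ j → G j = A j 1 := by
    intro j hj; simp [hG, hj]
  -- rabbits cannot be older than the generation number
  have Z : ∀ m x : ℕ, 1 ≤ m → m < x → A m x = 0 := by
    intro m
    induction m with
    | zero => intro x h; omega
    | succ k ih =>
      intro x _ hx
      rcases Nat.lt_or_ge d x with h | h
      · exact hdead _ _ (Or.inr h)
      · rcases Nat.eq_zero_or_pos k with hk | hk
        · subst hk; exact hA1 x (by omega)
        · obtain ⟨y, rfl⟩ : ∃ y, x = y + 1 := ⟨x - 1, by omega⟩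
          rw [hage k y hk (by omega) (by omega)]
          exact ih y hk (by omega)
  -- shift lemma
  have S : ∀ x : ℕ, 1 ≤ x → x ≤ d → ∀ k : ℕ, 1 ≤ k → A (k + x - 1) x = A k 1 := by
    intro x
    induction x with
    | zero => omega
    | succ y ih =>
      intro _ hxd k hk
      rcases Nat.eq_zero_or_pos y with hy | hy
      · subst hy; simp
      · have e : k + (y + 1) - 1 = (k + y - 1) + 1 := by omega
        rw [e, hage (k + y - 1) y (by omega) hy (by omega)]
        exact ih hy (by omega) k hk
  have P : ∀ m x : ℕ, 1 ≤ m → 1 ≤ x → x ≤ d → A m x = G (m + 1 - x) := by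
    intro m x hm hx hxd
    rcases Nat.lt_or_ge m x with h | h
    · have h0 : m + 1 - x = 0 := by omega
      rw [Z m x hm h, h0]
      simp [hG]
    · have h1 : 1 ≤ m + 1 - x := by omega
      rw [GA _ h1, ← S x hx hxd (m + 1 - x) h1]
      congr 1
      omega
  -- shift reindexing for sums
  have SH : ∀ (g : ℕ → ℕ) (a b t : ℕ),
      ∑ x ∈ Finset.Icc a b, g (x + t) = ∑ x ∈ Finset.Icc (a + t) (b + t), g x := by
    intro g a b t
    rw [← Finset.map_add_right_Icc a b t, Finset.sum_map]
    rfl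
  -- splitting sums over Icc
  have split : ∀ (g : ℕ → ℕ) (a b c : ℕ), a ≤ b + 1 → b ≤ c →
      ∑ x ∈ Finset.Icc a c, g x = ∑ x ∈ Finset.Icc a b, g x + ∑ x ∈ Finset.Icc (b + 1) c, g x := by
    intro g a b c h1 h2
    rw [← Finset.sum_union]
    · congr 1
      ext z
      simp only [Finset.mem_union, Finset.mem_Icc]
      omega
    · rw [Finset.disjoint_left]
      intro z hz hz'
      simp only [Finset.mem_Icc] at hz hz'
      omega
  intro n hn
  obtain ⟨m, rfl⟩ : ∃ m, n = m + d + 1 := ⟨n - d - 1, by omega⟩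
  have hm : 1 ≤ m := by omega
  have hd : 1 ≤ d := le_trans hf hfd
  have e1 : m + d + 1 - d - 1 = m := by omega
  have e2 : m + d + 1 - 1 = m + d := by omega
  have e3 : m + d + 1 - f = m + (d - f) + 1 := by omega
  rw [e1, e2, e3]
  -- abbreviation for the "young" tail sum
  set T : ℕ := ∑ x ∈ Finset.Icc 1 (f - 1), A m x with hT
  -- (1) : F (m+d+1) + G (m+1) = F (m+d) + A (m+d+1) 1
  have h1 : F (m + d + 1) + G (m + 1) = F (m + d) + A (m + d + 1) 1 := by
    have l1 : F (m + d + 1) = A (m + d + 1) 1 + ∑ x ∈ Finset.Icc 2 d, A (m + d + 1) x := by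
      rw [hF, split (fun x => A (m + d + 1) x) 1 1 d (by omega) hd]
      simp
    have l2 : ∑ x ∈ Finset.Icc 2 d, A (m + d + 1) x
        = ∑ x ∈ Finset.Icc 1 (d - 1), A (m + d) x := by
      have : ∑ x ∈ Finset.Icc 1 (d - 1), A (m + d + 1) (x + 1)
          = ∑ x ∈ Finset.Icc (1 + 1) (d - 1 + 1), A (m + d + 1) x :=
        SH (fun x => A (m + d + 1) x) 1 (d - 1) 1
      have e : d - 1 + 1 = d := by omega
      rw [e] at this
      rw [← this]
      refine Finset.sum_congr rfl ?_
      intro x hx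
      simp only [Finset.mem_Icc] at hx
      exact hage (m + d) x (by omega) hx.1 hx.2
    have l3 : F (m + d) = ∑ x ∈ Finset.Icc 1 (d - 1), A (m + d) x + G (m + 1) := by
      rw [hF, split (fun x => A (m + d) x) 1 (d - 1) d (by omega) (by omega)]
      have e : d - 1 + 1 = d := by omega
      rw [e, Finset.Icc_self, Finset.sum_singleton]
      congr 1
      rw [P (m + d) d (by omega) hd le_rfl]
      congr 1
      omega
    rw [l1, l2, l3]
    ring
  -- (3) : F m = G (m+1) + T
  have h3 : F m = G (m + 1) + T := by
    rw [hF, split (fun x => A m x) 1 (f - 1) d (by omega) (by omega)]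
    have e : f - 1 + 1 = f := by omega
    rw [e, hT, GA (m + 1) (by omega), hborn m hm]
    ring
  -- (2) : F (m + (d-f) + 1) = A (m+d+1) 1 + T
  have h2 : F (m + (d - f) + 1) = A (m + d + 1) 1 + T := by
    rw [hF, split (fun x => A (m + (d - f) + 1) x) 1 (d - f + 1) d (by omega) (by omega)]
    congr 1
    · -- first part equals the newborns at generation m+d+1
      rw [hborn (m + d) (by omega)]
      have l : ∑ x ∈ Finset.Icc 1 (d - f + 1), A (m + (d - f) + 1) x
          = ∑ x ∈ Finset.Icc 1 (d - f + 1), A (m + d) (x + (f - 1)) := by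
        refine Finset.sum_congr rfl ?_
        intro x hx
        simp only [Finset.mem_Icc] at hx
        rw [P (m + (d - f) + 1) x (by omega) hx.1 (by omega),
          P (m + d) (x + (f - 1)) (by omega) (by omega) (by omega)]
        congr 1
        omega
      rw [l, SH (fun x => A (m + d) x) 1 (d - f + 1) (f - 1)]
      have b1 : 1 + (f - 1) = f := by omega
      have b2 : d - f + 1 + (f - 1) = d := by omega
      rw [b1, b2]
    · -- second part equals T
      rw [hT]
      have l : ∑ x ∈ Finset.Icc 1 (f - 1), A m x
          = ∑ x ∈ Finset.Icc 1 (f - 1), A (m + (d - f) + 1) (x + (d - f + 1)) := by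
        refine Finset.sum_congr rfl ?_
        intro x hx
        simp only [Finset.mem_Icc] at hx
        rw [P m x hm hx.1 (by omega),
          P (m + (d - f) + 1) (x + (d - f + 1)) (by omega) (by omega) (by omega)]
        congr 1
        omega
      rw [l, SH (fun x => A (m + (d - f) + 1) x) 1 (f - 1) (d - f + 1)]
      have b1 : 1 + (d - f + 1) = d - f + 1 + 1 := by omega
      have b2 : f - 1 + (d - f + 1) = d := by omega
      rw [b1, b2]
  omega
end

section
/- For every generation n ≥ 2, the total number of rabbits satisfies F(n) = F(n−1) + ∑_{x=f}^{d−1} A(n−1, x); that is, the net growth from generation n−1 to generation n equals the number of rabbits of the previous generation whose age lies between f and d−1. -/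
theorem stmt_7 (f d : ℕ) (hf : 1 ≤ f) (hfd : f ≤ d)
    (A : ℕ → ℕ → ℕ)
    (hA11 : A 1 1 = 1)
    (hA1 : ∀ x : ℕ, x ≠ 1 → A 1 x = 0)
    (hborn : ∀ n : ℕ, 1 ≤ n → A (n + 1) 1 = ∑ x ∈ Finset.Icc f d, A n x)
    (hage : ∀ n x : ℕ, 1 ≤ n → 1 ≤ x → x ≤ d - 1 → A (n + 1) (x + 1) = A n x)
    (hdead : ∀ n x : ℕ, x = 0 ∨ x > d → A n x = 0)
    (F : ℕ → ℕ) (hF : ∀ n : ℕ, F n = ∑ x ∈ Finset.Icc 1 d, A n x) :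
    ∀ n : ℕ, 2 ≤ n → F n = F (n - 1) + ∑ x ∈ Finset.Icc f (d - 1), A (n - 1) x := by
  intro n hn
  obtain ⟨m, rfl⟩ : ∃ m, n = m + 1 := ⟨n - 1, (Nat.succ_pred_eq_of_pos (by omega)).symm⟩
  have hm : 1 ≤ m := by omega
  have hd1 : 1 ≤ d := le_trans hf hfd
  simp only [Nat.add_sub_cancel]
  rw [hF (m + 1), hF m]
  -- split off x = 1 from Icc 1 d
  have hsplit1 : ∀ (g : ℕ → ℕ), ∑ x ∈ Finset.Icc 1 d, g x = g 1 + ∑ x ∈ Finset.Icc 2 d, g x := by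
    intro g
    rw [← Finset.sum_Ioc_add_eq_sum_Icc hd1]
    have : Finset.Ioc 1 d = Finset.Icc 2 d := by
      ext x; simp [Finset.mem_Ioc, Finset.mem_Icc]; omega
    rw [this]; ring
  -- reindex Icc 2 d via +1
  have hreindex : ∀ (g : ℕ → ℕ), ∑ x ∈ Finset.Icc 2 d, g x = ∑ x ∈ Finset.Icc 1 (d - 1), g (x + 1) := by
    intro g
    have : Finset.Icc 2 d = (Finset.Icc 1 (d - 1)).map (addRightEmbedding 1) := by
      rw [Finset.map_add_right_Icc]
      congr 1 <;> omega
    rw [this, Finset.sum_map]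
    rfl
  rw [hsplit1 (A (m + 1)), hreindex (A (m + 1)), hborn m hm]
  have hage' : ∑ x ∈ Finset.Icc 1 (d - 1), A (m + 1) (x + 1) = ∑ x ∈ Finset.Icc 1 (d - 1), A m x := by
    apply Finset.sum_congr rfl
    intro x hx
    rw [Finset.mem_Icc] at hx
    exact hage m x hm hx.1 hx.2
  rw [hage']
  -- Now: ∑_{f..d} A m + ∑_{1..d-1} A m = ∑_{1..d} A m + ∑_{f..d-1} A m
  have hfd' : ∑ x ∈ Finset.Icc f d, A m x = (∑ x ∈ Finset.Icc f (d - 1), A m x) + A m d := by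
    have : Finset.Icc f d = insert d (Finset.Icc f (d - 1)) := by
      ext x; simp [Finset.mem_Icc, Finset.mem_insert]; omega
    rw [this, Finset.sum_insert (by simp [Finset.mem_Icc]; omega)]
    ring
  have h1d : ∑ x ∈ Finset.Icc 1 d, A m x = (∑ x ∈ Finset.Icc 1 (d - 1), A m x) + A m d := by
    have : Finset.Icc 1 d = insert d (Finset.Icc 1 (d - 1)) := by
      ext x; simp [Finset.mem_Icc, Finset.mem_insert]; omega
    rw [this, Finset.sum_insert (by simp [Finset.mem_Icc]; omega)]
    ring
  rw [hfd', h1d]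
  ring
end

section
/- For every generation n ≥ d+2, the total number of rabbits satisfies F(n) + ∑_{x=1}^{f} A(n−d, x) = F(n−1) + F(n−f). -/
theorem stmt_8 (f d : ℕ) (hf : 1 ≤ f) (hfd : f ≤ d)
    (A : ℕ → ℕ → ℕ)
    (hA11 : A 1 1 = 1)
    (hA1 : ∀ x : ℕ, x ≠ 1 → A 1 x = 0)
    (hborn : ∀ n : ℕ, 1 ≤ n → A (n + 1) 1 = ∑ x ∈ Finset.Icc f d, A n x)
    (hage : ∀ n x : ℕ, 1 ≤ n → 1 ≤ x → x ≤ d - 1 → A (n + 1) (x + 1) = A n x)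
    (hdead : ∀ n x : ℕ, x = 0 ∨ x > d → A n x = 0)
    (F : ℕ → ℕ) (hF : ∀ n : ℕ, F n = ∑ x ∈ Finset.Icc 1 d, A n x) :
    ∀ n : ℕ, d + 2 ≤ n → F n + ∑ x ∈ Finset.Icc 1 f, A (n - d) x = F (n - 1) + F (n - f) := by
  -- diagonal shift lemma
  have shift : ∀ k n x, 1 ≤ n → 1 ≤ x → x + k ≤ d → A (n + k) (x + k) = A n x := by
    intro k
    induction k with
    | zero => intro n x _ _ _; rfl
    | succ k ih =>
      intro n x hn hx hxk
      have h1 : A (n + k + 1) (x + k + 1) = A (n + k) (x + k) :=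
        hage (n + k) (x + k) (by omega) (by omega) (by omega)
      have e : n + (k + 1) = n + k + 1 := by omega
      have e' : x + (k + 1) = x + k + 1 := by omega
      rw [e, e', h1]
      exact ih n x hn hx (by omega)
  have sumshift : ∀ (g : ℕ → ℕ) (a b c : ℕ),
      ∑ x ∈ Finset.Icc (a + c) (b + c), g x = ∑ x ∈ Finset.Icc a b, g (x + c) := by
    intro g a b c
    rw [← Finset.map_add_right_Icc, Finset.sum_map]
    rfl
  have split : ∀ (g : ℕ → ℕ) (a b : ℕ), a ≤ b →
      ∑ x ∈ Finset.Icc 1 b, g x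
        = ∑ x ∈ Finset.Icc 1 a, g x + ∑ x ∈ Finset.Icc (a + 1) b, g x := by
    intro g a b hab
    have h := Finset.sum_Ioc_consecutive g (by omega : (0:ℕ) ≤ a) hab
    rw [← Finset.Icc_add_one_left_eq_Ioc 0 b, ← Finset.Icc_add_one_left_eq_Ioc 0 a, ← Finset.Icc_add_one_left_eq_Ioc a b] at h
    simpa using h.symm
  intro n hn
  obtain ⟨m, hm, rfl⟩ : ∃ m, 2 ≤ m ∧ n = m + d := ⟨n - d, by omega, by omega⟩
  have e1 : m + d - 1 = m + (d - 1) := by omega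
  have e2 : m + d - f = m + (d - f) := by omega
  have e3 : m + d - d = m := by omega
  rw [e1, e2, e3, hF, hF, hF]
  -- newborns
  have hb : A (m + d) 1 = ∑ x ∈ Finset.Icc f d, A (m + (d - 1)) x := by
    have := hborn (m + (d - 1)) (by omega)
    have e : m + (d - 1) + 1 = m + d := by omega
    rwa [e] at this
  -- aging of the bulk
  have ha : ∑ x ∈ Finset.Icc 2 d, A (m + d) x
      = ∑ x ∈ Finset.Icc 1 (d - 1), A (m + (d - 1)) x := by
    have e : (2 : ℕ) = 1 + 1 := rfl
    have e' : d = (d - 1) + 1 := by omega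
    rw [e, e', sumshift]
    refine Finset.sum_congr rfl ?_
    intro x hx
    simp only [Finset.mem_Icc] at hx
    have := hage (m + (d - 1)) x (by omega) (by omega) (by omega)
    have e'' : m + (d - 1) + 1 = m + (d - 1 + 1) := by omega
    rw [e''] at this
    rw [← e'] at this ⊢
    exact this
  -- fertile sum shifted back f-1 steps
  have hfshift : ∑ x ∈ Finset.Icc f d, A (m + (d - 1)) x
      = ∑ x ∈ Finset.Icc 1 (d - f + 1), A (m + (d - f)) x := by
    have e : f = 1 + (f - 1) := by omega
    have e' : d = (d - f + 1) + (f - 1) := by omega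
    rw [e, e', sumshift, ← e, ← e']
    refine Finset.sum_congr rfl ?_
    intro x hx
    simp only [Finset.mem_Icc] at hx
    have := shift (f - 1) (m + (d - f)) x (by omega) (by omega) (by omega)
    have e'' : m + (d - f) + (f - 1) = m + (d - 1) := by omega
    rw [e''] at this
    exact this
  -- tail of F(m + (d-f))
  have htail : ∑ x ∈ Finset.Icc (d - f + 1 + 1) d, A (m + (d - f)) x
      = ∑ x ∈ Finset.Icc 2 f, A m x := by
    have h := sumshift (A (m + (d - f))) 2 f (d - f)
    have e : 2 + (d - f) = d - f + 1 + 1 := by omega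
    have e' : f + (d - f) = d := by omega
    rw [e, e'] at h
    rw [h]
    refine Finset.sum_congr rfl ?_
    intro x hx
    simp only [Finset.mem_Icc] at hx
    exact shift (d - f) m x (by omega) (by omega) (by omega)
  -- top term of F(m + (d-1))
  have htop : ∑ x ∈ Finset.Icc (d - 1 + 1) d, A (m + (d - 1)) x = A m 1 := by
    have e : d - 1 + 1 = d := by omega
    rw [e, Finset.Icc_self, Finset.sum_singleton]
    have := shift (d - 1) m 1 (by omega) (by omega) (by omega)
    have e' : 1 + (d - 1) = d := by omega
    rwa [e'] at this
  rw [split (A (m + d)) 1 d (by omega), Finset.Icc_self, Finset.sum_singleton, hb,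
    split (A m) 1 f hf, Finset.Icc_self, Finset.sum_singleton,
    split (A (m + (d - 1))) (d - 1) d (by omega), htop,
    split (A (m + (d - f))) (d - f + 1) d (by omega), htail,
    hfshift, ha]
  ring
end

section
/- The total number F(n) of rabbits at generation n, for a population that becomes fertile at age f and dies at age d ≥ f, with F(1) = 1, satisfies: F(n) = 1 for 2 ≤ n ≤ f; F(n) = F(n−1) + F(n−f) for f < n ≤ d; F(d+1) = F(d) + F(d+1−f) − 1; and F(n) = F(n−1) + F(n−f) − F(n−d−1) for n ≥ d+2 (the subtractions never go below zero, so the identities may be stated additively as F(d+1) + 1 = F(d) + F(d+1−f) and F(n) + F(n−d−1) = F(n−1) + F(n−f)). -/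
theorem stmt_9 (f d : ℕ) (hf : 1 ≤ f) (hfd : f ≤ d)
    (A : ℕ → ℕ → ℕ)
    (hA11 : A 1 1 = 1)
    (hA1 : ∀ x : ℕ, x ≠ 1 → A 1 x = 0)
    (hborn : ∀ n : ℕ, 1 ≤ n → A (n + 1) 1 = ∑ x ∈ Finset.Icc f d, A n x)
    (hage : ∀ n x : ℕ, 1 ≤ n → 1 ≤ x → x ≤ d - 1 → A (n + 1) (x + 1) = A n x)
    (hdead : ∀ n x : ℕ, x = 0 ∨ x > d → A n x = 0)
    (F : ℕ → ℕ) (hF : ∀ n : ℕ, F n = ∑ x ∈ Finset.Icc 1 d, A n x) :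
    (∀ n : ℕ, 2 ≤ n → n ≤ f → F n = 1) ∧
    (∀ n : ℕ, f < n → n ≤ d → F n = F (n - 1) + F (n - f)) ∧
    (F (d + 1) + 1 = F d + F (d + 1 - f)) ∧
    (∀ n : ℕ, d + 2 ≤ n → F n + F (n - d - 1) = F (n - 1) + F (n - f)) := by
  set B : ℕ → ℕ := fun k => A k 1 with hB
  -- no rabbit is older than the generation number
  have hzero : ∀ n, 1 ≤ n → ∀ x, n < x → A n x = 0 := by
    intro n
    induction n with
    | zero => omega
    | succ m ih =>
      intro _ x hx
      rcases Nat.lt_or_ge d x with h | h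
      · exact hdead _ _ (Or.inr h)
      · rcases Nat.eq_or_lt_of_le (Nat.one_le_iff_ne_zero.mpr (by omega : m + 1 ≠ 0)) with h1 | h1
        · -- m + 1 = 1, i.e. m = 0
          have hm : m = 0 := by omega
          subst hm
          exact hA1 x (by omega)
        · have hm1 : 1 ≤ m := by omega
          have hx2 : 2 ≤ x := by omega
          have : A (m + 1) x = A m (x - 1) := by
            have := hage m (x - 1) hm1 (by omega) (by omega)
            rwa [show x - 1 + 1 = x by omega] at this
          rw [this]
          exact ih hm1 (x - 1) (by omega)
  -- the shift lemma: a rabbit of age x at generation n was born at generation n+1-x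
  have hshift : ∀ x, 1 ≤ x → x ≤ d → ∀ n, x ≤ n → A n x = B (n + 1 - x) := by
    intro x hx
    induction x with
    | zero => omega
    | succ y ih =>
      intro hxd n hxn
      rcases Nat.eq_or_lt_of_le hx with h1 | h1
      · have : y = 0 := by omega
        subst this
        simp [hB]
      · have hy1 : 1 ≤ y := by omega
        obtain ⟨m, rfl⟩ : ∃ m, n = m + 1 := ⟨n - 1, by omega⟩
        have hm1 : 1 ≤ m := by omega
        rw [hage m y hm1 hy1 (by omega)]
        rw [ih hy1 (by omega) m (by omega)]
        congr 1
        omega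
  -- no births before generation f+1 (other than the initial rabbit)
  have hBz : ∀ n, 1 ≤ n → n < f → B (n + 1) = 0 := by
    intro n hn hnf
    show A (n + 1) 1 = 0
    rw [hborn n hn]
    apply Finset.sum_eq_zero
    intro x hx
    rw [Finset.mem_Icc] at hx
    exact hzero n hn x (by omega)
  -- F as a sum of births over a window
  have hFs : ∀ n, 1 ≤ n → F n = ∑ k ∈ Finset.Ioc (n - d) n, B k := by
    intro n hn
    rw [hF]
    rw [show Finset.Icc 1 d = Finset.Icc 1 (min n d) ∪ Finset.Icc (min n d + 1) d by
      ext a; simp only [Finset.mem_Icc, Finset.mem_union]; omega]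
    rw [Finset.sum_union (by
      rw [Finset.disjoint_left]
      intro a ha hb
      rw [Finset.mem_Icc] at ha hb
      omega)]
    have h2 : ∑ x ∈ Finset.Icc (min n d + 1) d, A n x = 0 := by
      apply Finset.sum_eq_zero
      intro x hx
      rw [Finset.mem_Icc] at hx
      exact hzero n hn x (by omega)
    rw [h2, add_zero]
    apply Finset.sum_nbij' (i := fun x => n + 1 - x) (j := fun k => n + 1 - k)
    · intro a ha; rw [Finset.mem_Icc] at ha; rw [Finset.mem_Ioc]; omega
    · intro a ha; rw [Finset.mem_Ioc] at ha; rw [Finset.mem_Icc]; omega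
    · intro a ha; rw [Finset.mem_Icc] at ha; omega
    · intro a ha; rw [Finset.mem_Ioc] at ha; omega
    · intro a ha; rw [Finset.mem_Icc] at ha
      exact hshift a (by omega) (by omega) n (by omega)
  -- births as a sum of past births over a window
  have hBs : ∀ n, f ≤ n → B (n + 1) = ∑ k ∈ Finset.Ioc (n - d) (n + 1 - f), B k := by
    intro n hn
    show A (n + 1) 1 = ∑ k ∈ Finset.Ioc (n - d) (n + 1 - f), B k
    rw [hborn n (by omega)]
    rw [show Finset.Icc f d = Finset.Icc f (min n d) ∪ Finset.Icc (min n d + 1) d by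
      ext a; simp only [Finset.mem_Icc, Finset.mem_union]; omega]
    rw [Finset.sum_union (by
      rw [Finset.disjoint_left]
      intro a ha hb
      rw [Finset.mem_Icc] at ha hb
      omega)]
    have h2 : ∑ x ∈ Finset.Icc (min n d + 1) d, A n x = 0 := by
      apply Finset.sum_eq_zero
      intro x hx
      rw [Finset.mem_Icc] at hx
      exact hzero n (by omega) x (by omega)
    rw [h2, add_zero]
    apply Finset.sum_nbij' (i := fun x => n + 1 - x) (j := fun k => n + 1 - k)
    · intro a ha; rw [Finset.mem_Icc] at ha; rw [Finset.mem_Ioc]; omega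
    · intro a ha; rw [Finset.mem_Ioc] at ha; rw [Finset.mem_Icc]; omega
    · intro a ha; rw [Finset.mem_Icc] at ha; omega
    · intro a ha; rw [Finset.mem_Ioc] at ha; omega
    · intro a ha; rw [Finset.mem_Icc] at ha
      exact hshift a (by omega) (by omega) n (by omega)
  -- splitting sums over consecutive intervals
  have hsplit : ∀ a b c : ℕ, a ≤ b → b ≤ c →
      (∑ k ∈ Finset.Ioc a b, B k) + (∑ k ∈ Finset.Ioc b c, B k) = ∑ k ∈ Finset.Ioc a c, B k := by
    intro a b c hab hbc
    rw [← Finset.sum_union (by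
      rw [Finset.disjoint_left]
      intro x hx hy
      rw [Finset.mem_Ioc] at hx hy
      omega)]
    rw [Finset.Ioc_union_Ioc_eq_Ioc hab hbc]
  have hsing : ∀ a : ℕ, (∑ k ∈ Finset.Ioc a (a + 1), B k) = B (a + 1) := by
    intro a
    rw [Nat.Ioc_succ_singleton, Finset.sum_singleton]
  have hB1 : B 1 = 1 := hA11
  refine ⟨?_, ?_, ?_, ?_⟩
  · -- part 1
    intro n h2 hnf
    rw [hFs n (by omega), show n - d = 0 by omega]
    rw [Finset.sum_eq_single_of_mem 1 (by rw [Finset.mem_Ioc]; omega)]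
    · exact hB1
    · intro k hk hk1
      rw [Finset.mem_Ioc] at hk
      have := hBz (k - 1) (by omega) (by omega)
      rwa [show k - 1 + 1 = k by omega] at this
  · -- part 2
    intro n hfn hnd
    rw [hFs n (by omega), hFs (n - 1) (by omega), hFs (n - f) (by omega)]
    rw [show n - d = 0 by omega, show n - 1 - d = 0 by omega, show n - f - d = 0 by omega]
    have hBn : B n = ∑ k ∈ Finset.Ioc 0 (n - f), B k := by
      have := hBs (n - 1) (by omega)
      rwa [show n - 1 + 1 = n by omega, show n - 1 - d = 0 by omega] at this
    have h1 := hsplit 0 (n - 1) n (by omega) (by omega)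
    have h2 : (∑ k ∈ Finset.Ioc (n - 1) n, B k) = B n := by
      have := hsing (n - 1)
      rwa [show n - 1 + 1 = n by omega] at this
    omega
  · -- part 3
    rw [hFs (d + 1) (by omega), hFs d (by omega), hFs (d + 1 - f) (by omega)]
    rw [show d + 1 - d = 1 by omega, show d - d = 0 by omega, show d + 1 - f - d = 0 by omega]
    have hBd1 : B (d + 1) = ∑ k ∈ Finset.Ioc 0 (d + 1 - f), B k := by
      have := hBs d (by omega)
      rwa [show d - d = 0 by omega] at this
    have h1 := hsplit 0 1 (d + 1) (by omega) (by omega)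
    have h2 := hsplit 0 d (d + 1) (by omega) (by omega)
    have h3 : (∑ k ∈ Finset.Ioc 0 1, B k) = 1 := by
      simp [hB1]
    have h4 : (∑ k ∈ Finset.Ioc d (d + 1), B k) = B (d + 1) := hsing d
    omega
  · -- part 4
    intro n hn
    rw [hFs n (by omega), hFs (n - 1) (by omega), hFs (n - d - 1) (by omega),
      hFs (n - f) (by omega)]
    rw [show n - 1 - d = n - d - 1 by omega, show n - d - 1 - d = n - 2 * d - 1 by omega,
      show n - f - d = n - d - f by omega]
    -- B n = sum over (n-d-1, n-f]
    have hBn : B n = ∑ k ∈ Finset.Ioc (n - d - 1) (n - f), B k := by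
      have := hBs (n - 1) (by omega)
      rwa [show n - 1 + 1 = n by omega, show n - 1 - d = n - d - 1 by omega] at this
    -- B (n-d) = sum over (n-2d-1, n-d-f]
    have hBnd : B (n - d) = ∑ k ∈ Finset.Ioc (n - 2 * d - 1) (n - d - f), B k := by
      rcases Nat.lt_or_ge (n - d - 1) f with h | h
      · have hz : B (n - d) = 0 := by
          have := hBz (n - d - 1) (by omega) (by omega)
          rwa [show n - d - 1 + 1 = n - d by omega] at this
        rw [hz, show n - 2 * d - 1 = 0 by omega, show n - d - f = 0 by omega]
        simp
      · have := hBs (n - d - 1) (by omega)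
        rwa [show n - d - 1 + 1 = n - d by omega,
          show n - d - 1 - d = n - 2 * d - 1 by omega] at this
    -- key split equalities
    have e1 := hsplit (n - d - 1) (n - d) n (by omega) (by omega)
    have e2 := hsplit (n - d - 1) (n - 1) n (by omega) (by omega)
    have e3 : (∑ k ∈ Finset.Ioc (n - d - 1) (n - d), B k) = B (n - d) := by
      have := hsing (n - d - 1)
      rwa [show n - d - 1 + 1 = n - d by omega] at this
    have e4 : (∑ k ∈ Finset.Ioc (n - 1) n, B k) = B n := by
      have := hsing (n - 1)
      rwa [show n - 1 + 1 = n by omega] at this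
    have e5 := hsplit (n - 2 * d - 1) (n - d - f) (n - d - 1) (by omega) (by omega)
    have e6 := hsplit (n - d - f) (n - d - 1) (n - f) (by omega) (by omega)
    have e7 := hsplit (n - 2 * d - 1) (n - d - f) (n - f) (by omega) (by omega)
    have e8 := hsplit (n - d - 1) (n - d - 1) (n - f) (le_refl _) (by omega)
    omega
end

section
/- For every generation n ≥ d+2, the number of newborns minus the number of deaths equals F(n−f) − F(n−d−1); that is, A(n, 1) + F(n−d−1) = A(n−1, d) + F(n−f) (even though in general A(n, 1) ≠ F(n−f) and A(n−1, d) ≠ F(n−d−1)). -/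
theorem stmt_10 (f d : ℕ) (hf : 1 ≤ f) (hfd : f ≤ d)
    (A : ℕ → ℕ → ℕ)
    (hA11 : A 1 1 = 1)
    (hA1 : ∀ x : ℕ, x ≠ 1 → A 1 x = 0)
    (hborn : ∀ n : ℕ, 1 ≤ n → A (n + 1) 1 = ∑ x ∈ Finset.Icc f d, A n x)
    (hage : ∀ n x : ℕ, 1 ≤ n → 1 ≤ x → x ≤ d - 1 → A (n + 1) (x + 1) = A n x)
    (hdead : ∀ n x : ℕ, x = 0 ∨ x > d → A n x = 0)
    (F : ℕ → ℕ) (hF : ∀ n : ℕ, F n = ∑ x ∈ Finset.Icc 1 d, A n x) :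
    ∀ n : ℕ, d + 2 ≤ n → A n 1 + F (n - d - 1) = A (n - 1) d + F (n - f) := by
  -- rabbits older than their generation don't exist
  have hzero : ∀ n, 1 ≤ n → ∀ x, n < x → A n x = 0 := by
    intro n hn
    induction n, hn using Nat.le_induction with
    | base => intro x hx; exact hA1 x (by omega)
    | succ n hn ih =>
      intro x hx
      rcases le_or_gt x d with hxd | hxd
      · have hx1 : x = (x - 1) + 1 := by omega
        rw [hx1, hage n (x - 1) hn (by omega) (by omega)]
        exact ih (x - 1) (by omega)
      · exact hdead _ x (Or.inr hxd)
  -- aging: A n x = A (n - x + 1) 1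
  have hshift : ∀ x, 1 ≤ x → x ≤ d → ∀ n, x ≤ n → A n x = A (n - x + 1) 1 := by
    intro x hx
    induction x, hx using Nat.le_induction with
    | base => intro _ n hn; congr 1; omega
    | succ x hx ih =>
      intro hxd n hn
      have h1 : n = (n - 1) + 1 := by omega
      rw [h1, hage (n - 1) x (by omega) hx (by omega),
        ih (by omega) (n - 1) (by omega)]
      congr 1
      omega
  -- F as a sum of newborn counts
  have hFsum : ∀ m, 1 ≤ m → F m = ∑ k ∈ Finset.Ioc (m - d) m, A k 1 := by
    intro m hm
    rw [hF]
    have hsub : ∑ x ∈ Finset.Icc 1 d, A m x = ∑ x ∈ Finset.Icc 1 (min d m), A m x := by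
      refine (Finset.sum_subset ?_ ?_).symm
      · apply Finset.Icc_subset_Icc_right (min_le_left d m)
      · intro x hx hx'
        simp only [Finset.mem_Icc] at hx hx'
        exact hzero m hm x (by omega)
    rw [hsub]
    refine Finset.sum_nbij' (fun x => m - x + 1) (fun k => m - k + 1) ?_ ?_ ?_ ?_ ?_
    · intro a ha; simp only [Finset.mem_Icc, Finset.mem_Ioc] at *; omega
    · intro a ha; simp only [Finset.mem_Icc, Finset.mem_Ioc] at *; omega
    · intro a ha; simp only [Finset.mem_Icc] at ha; omega
    · intro a ha; simp only [Finset.mem_Ioc] at ha; omega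
    · intro a ha
      simp only [Finset.mem_Icc] at ha
      exact hshift a (by omega) (by omega) m (by omega)
  -- newborns as a sum of earlier newborn counts
  have hBorn : ∀ m, 1 ≤ m → A (m + 1) 1 = ∑ k ∈ Finset.Ioc (m - d) (m + 1 - f), A k 1 := by
    intro m hm
    rw [hborn m hm]
    have hsub : ∑ x ∈ Finset.Icc f d, A m x = ∑ x ∈ Finset.Icc f (min d m), A m x := by
      refine (Finset.sum_subset ?_ ?_).symm
      · apply Finset.Icc_subset_Icc_right (min_le_left d m)
      · intro x hx hx'
        simp only [Finset.mem_Icc] at hx hx'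
        exact hzero m hm x (by omega)
    rw [hsub]
    refine Finset.sum_nbij' (fun x => m - x + 1) (fun k => m - k + 1) ?_ ?_ ?_ ?_ ?_
    · intro a ha; simp only [Finset.mem_Icc, Finset.mem_Ioc] at *; omega
    · intro a ha; simp only [Finset.mem_Icc, Finset.mem_Ioc] at *; omega
    · intro a ha; simp only [Finset.mem_Icc] at ha; omega
    · intro a ha; simp only [Finset.mem_Ioc] at ha; omega
    · intro a ha
      simp only [Finset.mem_Icc] at ha
      exact hshift a (by omega) (by omega) m (by omega)
  intro n hn
  -- rewrite the four quantities
  have e1 : A n 1 = ∑ k ∈ Finset.Ioc (n - d - 1) (n - f), A k 1 := by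
    have h := hBorn (n - 1) (by omega)
    rw [show n - 1 - d = n - d - 1 by omega, show n - 1 + 1 = n by omega] at h
    exact h
  have e2 : F (n - d - 1) = ∑ k ∈ Finset.Ioc (n - d - 1 - d) (n - d - 1), A k 1 :=
    hFsum (n - d - 1) (by omega)
  have e3 : A (n - 1) d = ∑ k ∈ Finset.Ioc (n - d - 1 - d) (n - f - d), A k 1 := by
    have h0 : A (n - 1) d = A (n - d) 1 := by
      rw [hshift d (by omega) (le_refl d) (n - 1) (by omega)]
      congr 1; omega
    have h := hBorn (n - d - 1) (by omega)
    rw [show n - d - 1 + 1 = n - d by omega,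
      show n - d - f = n - f - d by omega] at h
    rw [h0, h]
  have e4 : F (n - f) = ∑ k ∈ Finset.Ioc (n - f - d) (n - f), A k 1 :=
    hFsum (n - f) (by omega)
  rw [e1, e2, e3, e4, add_comm (∑ k ∈ Finset.Ioc (n - d - 1) (n - f), A k 1),
    Finset.sum_Ioc_consecutive (fun k => A k 1) (show n - d - 1 - d ≤ n - d - 1 by omega)
      (show n - d - 1 ≤ n - f by omega),
    Finset.sum_Ioc_consecutive (fun k => A k 1) (show n - d - 1 - d ≤ n - f - d by omega)
      (show n - f - d ≤ n - f by omega)]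
end

section
/- (Oller-Marcén's recurrence, equivalent to the compact formula.) For every generation n ≥ d+1, the total number of rabbits satisfies F(n) = ∑_{i=f}^{d} F(n−i) = F(n−f) + F(n−f−1) + ⋯ + F(n−d). -/
theorem stmt_11 (f d : ℕ) (hf : 1 ≤ f) (hfd : f ≤ d)
    (A : ℕ → ℕ → ℕ)
    (hA11 : A 1 1 = 1)
    (hA1 : ∀ x : ℕ, x ≠ 1 → A 1 x = 0)
    (hborn : ∀ n : ℕ, 1 ≤ n → A (n + 1) 1 = ∑ x ∈ Finset.Icc f d, A n x)
    (hage : ∀ n x : ℕ, 1 ≤ n → 1 ≤ x → x ≤ d - 1 → A (n + 1) (x + 1) = A n x)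
    (hdead : ∀ n x : ℕ, x = 0 ∨ x > d → A n x = 0)
    (F : ℕ → ℕ) (hF : ∀ n : ℕ, F n = ∑ x ∈ Finset.Icc 1 d, A n x) :
    ∀ n : ℕ, d + 1 ≤ n → F n = ∑ i ∈ Finset.Icc f d, F (n - i) := by
  -- shift lemma
  have L1 : ∀ x, 1 ≤ x → x ≤ d → ∀ m, x ≤ m → A m x = A (m - x + 1) 1 := by
    intro x
    induction x with
    | zero => intro h; omega
    | succ x ih =>
      intro h1 hxd m hxm
      by_cases hx0 : x = 0
      · subst hx0
        have : m - 1 + 1 = m := by omega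
        rw [this]
      · have hx1 : 1 ≤ x := by omega
        obtain ⟨m', rfl⟩ : ∃ m', m = m' + 1 := ⟨m - 1, by omega⟩
        rw [hage m' x (by omega) hx1 (by omega), ih hx1 (by omega) m' (by omega)]
        congr 1
        omega
  -- vanishing lemma
  have L2 : ∀ m, 1 ≤ m → ∀ x, m < x → A m x = 0 := by
    intro m
    induction m with
    | zero => intro h; omega
    | succ m ih =>
      intro _ x hx
      by_cases hm0 : m = 0
      · subst hm0; exact hA1 x (by omega)
      · by_cases hxd : x > d
        · exact hdead _ _ (Or.inr hxd)
        · obtain ⟨x', rfl⟩ : ∃ x', x = x' + 1 := ⟨x - 1, by omega⟩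
          rw [hage m x' (by omega) (by omega) (by omega)]
          exact ih (by omega) x' (by omega)
  -- symmetry lemma
  have L3 : ∀ n a b, a ≤ d → b ≤ d → 1 ≤ a → 1 ≤ b → d + 1 ≤ n →
      A (n - a) b = A (n - b) a := by
    intro n a b had hbd ha1 hb1 hn
    by_cases hab : a + b ≤ n
    · rw [L1 b hb1 hbd (n - a) (by omega), L1 a ha1 had (n - b) (by omega)]
      congr 2
      omega
    · rw [L2 (n - a) (by omega) b (by omega), L2 (n - b) (by omega) a (by omega)]
  intro n hn
  rw [hF]
  have step : ∀ x ∈ Finset.Icc 1 d, A n x = ∑ y ∈ Finset.Icc f d, A (n - x) y := by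
    intro x hx
    simp only [Finset.mem_Icc] at hx
    rw [L1 x hx.1 hx.2 n (by omega), hborn (n - x) (by omega)]
  rw [Finset.sum_congr rfl step]
  have step2 : ∀ x ∈ Finset.Icc 1 d, ∑ y ∈ Finset.Icc f d, A (n - x) y
      = ∑ y ∈ Finset.Icc f d, A (n - y) x := by
    intro x hx
    simp only [Finset.mem_Icc] at hx
    apply Finset.sum_congr rfl
    intro y hy
    simp only [Finset.mem_Icc] at hy
    exact L3 n x y hx.2 hy.2 hx.1 (by omega) hn
  rw [Finset.sum_congr rfl step2, Finset.sum_comm]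
  apply Finset.sum_congr rfl
  intro y hy
  rw [hF]
end

section
/- In the case f = 2 and d = 3, the population sequence satisfies the Padovan recurrence: F(n) = F(n−2) + F(n−3) for every n ≥ 4. -/
theorem stmt_16
    (A : ℕ → ℕ → ℕ)
    (hA11 : A 1 1 = 1)
    (hA1 : ∀ x : ℕ, x ≠ 1 → A 1 x = 0)
    (hborn : ∀ n : ℕ, 1 ≤ n → A (n + 1) 1 = ∑ x ∈ Finset.Icc 2 3, A n x)
    (hage : ∀ n x : ℕ, 1 ≤ n → 1 ≤ x → x ≤ 2 → A (n + 1) (x + 1) = A n x)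
    (hdead : ∀ n x : ℕ, x = 0 ∨ x > 3 → A n x = 0)
    (F : ℕ → ℕ) (hF : ∀ n : ℕ, F n = ∑ x ∈ Finset.Icc 1 3, A n x) :
    ∀ n : ℕ, 4 ≤ n → F n = F (n - 2) + F (n - 3) := by
  have hIcc13 : Finset.Icc 1 3 = ({1, 2, 3} : Finset ℕ) := by decide
  have hIcc23 : Finset.Icc 2 3 = ({2, 3} : Finset ℕ) := by decide
  have hFs : ∀ k : ℕ, F k = A k 1 + A k 2 + A k 3 := by
    intro k; rw [hF, hIcc13]; simp [Finset.sum_insert, Finset.mem_insert]; ring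
  have h1 : ∀ k : ℕ, 1 ≤ k → A (k + 1) 1 = A k 2 + A k 3 := by
    intro k hk; rw [hborn k hk, hIcc23]; simp
  have h2 : ∀ k : ℕ, 1 ≤ k → A (k + 1) 2 = A k 1 := fun k hk =>
    hage k 1 hk le_rfl (by norm_num)
  have h3 : ∀ k : ℕ, 1 ≤ k → A (k + 1) 3 = A k 2 := fun k hk =>
    hage k 2 hk (by norm_num) le_rfl
  intro n hn
  obtain ⟨m, rfl⟩ : ∃ m, n = m + 4 := ⟨n - 4, by omega⟩
  have e1 := h1 (m + 3) (by omega)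
  have e2 := h2 (m + 3) (by omega)
  have e3 := h3 (m + 3) (by omega)
  have e4 := h1 (m + 2) (by omega)
  have e5 := h2 (m + 2) (by omega)
  have e6 := h3 (m + 2) (by omega)
  have e7 := h1 (m + 1) (by omega)
  have e8 := h2 (m + 1) (by omega)
  have e9 := h3 (m + 1) (by omega)
  have f1 := hFs (m + 4)
  have f2 := hFs (m + 2)
  have f3 := hFs (m + 1)
  simp only [show m + 4 - 2 = m + 2 by omega, show m + 4 - 3 = m + 1 by omega,
    show m + 3 + 1 = m + 4 by omega, show m + 2 + 1 = m + 3 by omega,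
    show m + 1 + 1 = m + 2 by omega] at *
  omega
end
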